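/- Let F be a field with char(F) ≠ 2, 3 and let A be the 2-dimensional algebra over F with e1·e1 = (1/2)e1, e1·e2 = 0, e2·e1 = (1/2)e2, e2·e2 = 0. Then every automorphism of A has matrix [[1,0],[z,t]] with respect to the basis (e1,e2), for some z ∈ F and nonzero t ∈ F, and conversely every such matrix defines an automorphism. -/

import Mathlib

/-! Since `mul5 x y = (y.1 / 2) • x`, a nonzero linear `f` is multiplicative iff it preserves
the first coordinate, `(f y).1 = y.1`. For a bijective `f` this says exactly that
`f e1 = (1, z)` and `f e2 = (0, t)` with `t ≠ 0`. -/

/-- Multiplication on `F × F` given by `e1·e1 = (1/2)e1`, `e1·e2 = 0`,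
`e2·e1 = (1/2)e2`, `e2·e2 = 0`, extended bilinearly. -/
def mul5 {F : Type*} [Field F] (x y : F × F) : F × F :=
  ((1/2 : F) * x.1 * y.1, (1/2 : F) * x.2 * y.1)

theorem mul5_eq_smul {F : Type*} [Field F] (x y : F × F) :
    mul5 x y = ((1/2 : F) * y.1) • x := by
  ext <;> simp only [mul5, Prod.smul_fst, Prod.smul_snd, smul_eq_mul] <;> ring

theorem map_mul5_iff_fst_apply {F : Type*} [Field F] (h2 : (2 : F) ≠ 0)
    (f : (F × F) →ₗ[F] (F × F)) (hf : f ≠ 0) :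
    (∀ x y, f (mul5 x y) = mul5 (f x) (f y)) ↔ ∀ y, (f y).1 = y.1 := by
  simp only [mul5_eq_smul, map_smul]
  refine ⟨fun H y => ?_, fun H x y => by rw [H]⟩
  obtain ⟨x, hx⟩ : ∃ x, f x ≠ 0 := by
    by_contra! h
    exact hf (LinearMap.ext h)
  have hcoef := smul_left_injective F hx (H x y)
  simpa [h2] using hcoef.symm

theorem fst_apply_eq_fst_iff {F : Type*} [Field F] (f : (F × F) ≃ₗ[F] (F × F)) :
    (∀ y, (f y).1 = y.1) ↔ ∃ z t : F, t ≠ 0 ∧ f (1, 0) = (1, z) ∧ f (0, 1) = (0, t) := by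
  constructor
  · intro H
    refine ⟨(f (1, 0)).2, (f (0, 1)).2, fun ht => ?_, Prod.ext (H _) rfl, Prod.ext (H _) rfl⟩
    have hzero : f (0, 1) = 0 := Prod.ext (H _) ht
    simp at hzero
  · rintro ⟨z, t, -, h1, h2⟩ y
    rw [show y = y.1 • (1, 0) + y.2 • (0, 1) by ext <;> simp, map_add, map_smul, map_smul, h1, h2]
    simp

theorem stmt_5_general {F : Type*} [Field F] (h2 : ringChar F ≠ 2)
    (f : (F × F) ≃ₗ[F] (F × F)) :
    (∀ x y : F × F, f (mul5 x y) = mul5 (f x) (f y)) ↔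
      ∃ z t : F, t ≠ 0 ∧ f (1, 0) = (1, z) ∧ f (0, 1) = (0, t) := by
  have hf : (f : (F × F) →ₗ[F] (F × F)) ≠ 0 := fun h => by
    simpa using LinearMap.congr_fun h (1, 0)
  rw [← fst_apply_eq_fst_iff f]
  exact map_mul5_iff_fst_apply (Ring.two_ne_zero h2) f hf

theorem stmt_5 {F : Type*} [Field F] (h2 : ringChar F ≠ 2) (h3 : ringChar F ≠ 3)
    (f : (F × F) ≃ₗ[F] (F × F)) :
    (∀ x y : F × F, f (mul5 x y) = mul5 (f x) (f y)) ↔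
      ∃ z t : F, t ≠ 0 ∧ f (1, 0) = (1, z) ∧ f (0, 1) = (0, t) :=
  stmt_5_general h2 f
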